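/- arXiv:1401.3806 — 4 statements merged into one kernel-verified Lean document; each statement's English description precedes it below -/
import Mathlib

section
/- Let (Ω, F, P) be a probability space, let F_k ⊆ F be a sub-σ-algebra, and let X be a random variable with |X| ≤ C almost surely that is measurable with respect to another sub-σ-algebra G. Suppose the φ-mixing bound sup{|P(A|B) − P(A)| : A ∈ G, B ∈ F_k, P(B) > 0} ≤ φ holds. Then ‖E[X | F_k] − E[X]‖_∞ ≤ 2Cφ. -/
open MeasureTheory Filter Set

/-!
Write `Y = E[X | F_k] - E X`. For `B ∈ F_k`, the integral of `Y` over `B` is the covariance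
`E[X (1_B - P B)] = E[X Z]` with `Z = E[1_B | G] - P B`, because `X` is `G`-measurable. On every
`A ∈ G` the mixing bound gives `|∫_A Z| = |P(A ∩ B) - P A P B| ≤ φ P B`; applied to `{Z ≥ 0}` and
`{Z ≤ 0}` this yields `E|Z| ≤ 2 φ P B`, hence `|∫_B Y| ≤ 2 C φ P B`. A function whose integral
over every `F_k`-set `B` is at most `c P B` in absolute value is bounded by `c` almost everywhere.
-/

section

variable {Ω : Type*} {m m₀ : MeasurableSpace Ω} {μ : Measure Ω}

lemma integral_mul_condExp (hm : m ≤ m₀) [SigmaFinite (μ.trim hm)]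
    {f g : Ω → ℝ} (hf : StronglyMeasurable[m] f) (hfg : Integrable (f * g) μ)
    (hg : Integrable g μ) :
    ∫ x, f x * μ[g|m] x ∂μ = ∫ x, f x * g x ∂μ :=
  (integral_congr_ae (condExp_mul_of_stronglyMeasurable_left hf hfg hg).symm).trans
    (integral_condExp hm)

lemma setIntegral_condExp_indicator_sub (hm : m ≤ m₀) [IsFiniteMeasure μ]
    {A B : Set Ω} (hA : MeasurableSet[m] A) (hB : MeasurableSet B) :
    ∫ x in A, (μ[B.indicator 1|m] x - μ.real B) ∂μ = μ.real (A ∩ B) - μ.real A * μ.real B := by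
  have hB1 : Integrable (B.indicator (1 : Ω → ℝ)) μ := (integrable_const 1).indicator hB
  rw [integral_sub integrable_condExp.integrableOn (integrable_const _).integrableOn,
    setIntegral_condExp hm hB1 hA, integral_indicator_one hB, setIntegral_const, smul_eq_mul,
    measureReal_restrict_apply hB, inter_comm]

lemma integral_abs_le_of_forall_abs_setIntegral_le {Z : Ω → ℝ} {ε : ℝ}
    (hZm : StronglyMeasurable[m] Z) (hZ : Integrable Z μ)
    (h : ∀ s, MeasurableSet[m] s → |∫ x in s, Z x ∂μ| ≤ ε) :
    ∫ x, |Z x| ∂μ ≤ 2 * ε := by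
  have hpos := h {x | 0 ≤ Z x} (measurableSet_le measurable_const hZm.measurable)
  have hneg := h {x | Z x ≤ 0} (measurableSet_le hZm.measurable measurable_const)
  have hsplit : ∫ x, |Z x| ∂μ = ∫ x in {x | 0 ≤ Z x}, Z x ∂μ - ∫ x in {x | Z x ≤ 0}, Z x ∂μ := by
    simpa only [Real.norm_eq_abs] using integral_norm_eq_pos_sub_neg hZ
  rw [hsplit]
  linarith [le_abs_self (∫ x in {x | 0 ≤ Z x}, Z x ∂μ), neg_abs_le (∫ x in {x | Z x ≤ 0}, Z x ∂μ)]

lemma abs_measureReal_inter_sub_mul_le [IsFiniteMeasure μ] {A B : Set Ω} {φ : ℝ}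
    (h : 0 < μ B → |μ.real (A ∩ B) / μ.real B - μ.real A| ≤ φ) :
    |μ.real (A ∩ B) - μ.real A * μ.real B| ≤ φ * μ.real B := by
  rcases eq_zero_or_pos (μ B) with hB | hB
  · simp [measureReal_def, hB, measure_mono_null inter_subset_right hB]
  have hB' : 0 < μ.real B := ENNReal.toReal_pos hB.ne' (measure_ne_top μ B)
  calc |μ.real (A ∩ B) - μ.real A * μ.real B|
      = |μ.real (A ∩ B) / μ.real B - μ.real A| * μ.real B := by
        rw [← abs_of_pos hB', ← abs_mul, abs_of_pos hB', sub_mul, div_mul_cancel₀ _ hB'.ne']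
    _ ≤ φ * μ.real B := by gcongr; exact h hB

lemma abs_setIntegral_sub_measureReal_mul_integral_le (hm : m ≤ m₀) [IsFiniteMeasure μ] {X : Ω → ℝ}
    {C φ : ℝ} (hC : 0 ≤ C) (hbd : ∀ᵐ x ∂μ, |X x| ≤ C) (hX : StronglyMeasurable[m] X)
    {B : Set Ω} (hB : MeasurableSet B)
    (hmix : ∀ A, MeasurableSet[m] A → |μ.real (A ∩ B) - μ.real A * μ.real B| ≤ φ * μ.real B) :
    |∫ x in B, X x ∂μ - μ.real B * ∫ x, X x ∂μ| ≤ 2 * C * φ * μ.real B := by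
  set Z : Ω → ℝ := fun x => μ[B.indicator 1|m] x - μ.real B
  have hXae : AEStronglyMeasurable X μ := (hX.mono hm).aestronglyMeasurable
  have hB1 : Integrable (B.indicator (1 : Ω → ℝ)) μ := (integrable_const 1).indicator hB
  have hZ : Integrable Z μ := integrable_condExp.sub (integrable_const _)
  have hXB : ∫ x, X x * B.indicator 1 x ∂μ = ∫ x in B, X x ∂μ := by
    rw [← integral_indicator hB]
    congr 1 with x
    by_cases hx : x ∈ B <;> simp [hx]
  have hcov : ∫ x in B, X x ∂μ - μ.real B * ∫ x, X x ∂μ = ∫ x, X x * Z x ∂μ := by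
    simp only [Z, mul_sub]
    rw [integral_sub (integrable_condExp.bdd_mul hXae hbd)
        ((Integrable.of_bound hXae C hbd).mul_const _),
      integral_mul_condExp hm hX (hB1.bdd_mul hXae hbd) hB1, hXB, integral_mul_const, mul_comm]
  have hZabs : ∫ x, |Z x| ∂μ ≤ 2 * (φ * μ.real B) := by
    refine integral_abs_le_of_forall_abs_setIntegral_le
      (stronglyMeasurable_condExp.sub stronglyMeasurable_const) hZ fun A hA => ?_
    simp only [Z]
    rw [setIntegral_condExp_indicator_sub hm hA hB]
    exact hmix A hA
  rw [hcov, ← Real.norm_eq_abs]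
  calc ‖∫ x, X x * Z x ∂μ‖ ≤ ∫ x, C * |Z x| ∂μ := by
        refine norm_integral_le_of_norm_le (hZ.abs.const_mul C) ?_
        filter_upwards [hbd] with x hx
        rw [norm_mul, Real.norm_eq_abs, Real.norm_eq_abs]
        exact mul_le_mul_of_nonneg_right hx (abs_nonneg _)
    _ = C * ∫ x, |Z x| ∂μ := integral_const_mul C _
    _ ≤ C * (2 * (φ * μ.real B)) := by gcongr
    _ = 2 * C * φ * μ.real B := by ring

lemma ae_abs_le_of_forall_abs_setIntegral_le [IsFiniteMeasure μ] {Y : Ω → ℝ} {c : ℝ}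
    (hY : Integrable Y μ) (h : ∀ s, MeasurableSet s → |∫ x in s, Y x ∂μ| ≤ c * μ.real s) :
    ∀ᵐ x ∂μ, |Y x| ≤ c := by
  have hc : Integrable (fun _ => c) μ := integrable_const c
  have hle : Y ≤ᵐ[μ] fun _ => c := ae_le_of_forall_setIntegral_le hY hc fun s hs _ => by
    rw [setIntegral_const, smul_eq_mul, mul_comm]
    exact (le_abs_self _).trans (h s hs)
  have hge : (fun _ => -c) ≤ᵐ[μ] Y := ae_le_of_forall_setIntegral_le hc.neg hY fun s hs _ => by
    rw [setIntegral_const, smul_eq_mul, mul_neg, mul_comm]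
    exact neg_le_of_abs_le (h s hs)
  filter_upwards [hle, hge] with x hx hx' using abs_le.2 ⟨hx', hx⟩

lemma ae_abs_le_of_forall_abs_setIntegral_le_of_stronglyMeasurable
    (hm : m ≤ m₀) [IsFiniteMeasure μ] {Y : Ω → ℝ} {c : ℝ}
    (hYm : StronglyMeasurable[m] Y) (hY : Integrable Y μ)
    (h : ∀ s, MeasurableSet[m] s → |∫ x in s, Y x ∂μ| ≤ c * μ.real s) :
    ∀ᵐ x ∂μ, |Y x| ≤ c := by
  refine ae_of_ae_trim hm (ae_abs_le_of_forall_abs_setIntegral_le (hY.trim hm hYm) fun s hs => ?_)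
  rw [← setIntegral_trim hm hYm hs, measureReal_def, trim_measurableSet_eq hm hs]
  exact h s hs

end

theorem stmt0 {Ω : Type*} {F : MeasurableSpace Ω} (μ : Measure Ω) [IsProbabilityMeasure μ]
    (m G : MeasurableSpace Ω) (hm : m ≤ F) (hG : G ≤ F)
    (X : Ω → ℝ) (C φ : ℝ)
    (hbd : ∀ᵐ ω ∂μ, |X ω| ≤ C)
    (hXmeas : StronglyMeasurable[G] X)
    (hmix : ∀ A B : Set Ω, MeasurableSet[G] A → MeasurableSet[m] B → 0 < μ B →
      |(μ (A ∩ B)).toReal / (μ B).toReal - (μ A).toReal| ≤ φ) :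
    eLpNorm (μ[X|m] - fun _ => ∫ ω, X ω ∂μ) ⊤ μ ≤ ENNReal.ofReal (2 * C * φ) := by
  have hC : 0 ≤ C := by
    obtain ⟨ω, hω⟩ := hbd.exists
    exact (abs_nonneg _).trans hω
  have hX : Integrable X μ :=
    .of_bound (hXmeas.mono hG).aestronglyMeasurable C hbd
  have hY : ∀ᵐ ω ∂μ, |μ[X|m] ω - ∫ ω, X ω ∂μ| ≤ 2 * C * φ := by
    refine ae_abs_le_of_forall_abs_setIntegral_le_of_stronglyMeasurable hm
      (stronglyMeasurable_condExp.sub stronglyMeasurable_const)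
      (integrable_condExp.sub (integrable_const _)) fun B hB => ?_
    rw [integral_sub integrable_condExp.integrableOn (integrable_const _).integrableOn,
      setIntegral_condExp hm hX hB, setIntegral_const, smul_eq_mul]
    exact abs_setIntegral_sub_measureReal_mul_integral_le hG hC hbd hXmeas (hm B hB)
      fun A hA => abs_measureReal_inter_sub_mul_le (hmix A B hA hB)
  rw [eLpNorm_exponent_top]
  exact eLpNormEssSup_le_of_ae_bound hY
end

section
/- In the setting of the environment process y_s = τ_{(cs, B_s)} ω: if a set A ∈ F satisfies ∫_{ℝ^d} 1_A(τ_{(cs,x)} ω) q_s(x) dx = 1_A(ω) for P-almost every ω and all s > 0 (where q_s is the d-dimensional Gaussian density with variance s), and the group T_{(t,x)} is strongly continuous, then 1_A(τ_{(t,x)} ω) = 1_A(ω) for all (t,x) ∈ ℝ^{d+1} and P-a.e. ω; consequently, by ergodicity of the group {τ_{(t,x)}}, P(A) ∈ {0, 1}. -/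
/-!
The shifts `p` with `τ p ⁻¹' A =ᵐ[μ] A` form a subgroup `H` of `ℝ × ℝᵈ`. Since the Gaussian
density is strictly positive, the averaging identity at time `s` forces `τ (c s, x) ⁻¹' A =ᵐ[μ] A`
for a.e. `x` (after exchanging the two a.e. quantifiers by Fubini), so `H` contains `(t, x)` for
every `t > 0` and a.e. `x`. Choosing one `x` that works for both `(t₁, z + x)` and `(t₂, x)`, with
`t₁ - t₂ = t`, shows `(t, z) ∈ H` for every `(t, z)`; ergodicity then gives `μ A ∈ {0, 1}`.
-/

open MeasureTheory Filter Set

section InvariantShifts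

variable {G Ω : Type*} [AddGroup G] [MeasurableSpace Ω]

def aeInvariantShifts (τ : G → Ω → Ω) (μ : Measure Ω) (A : Set Ω)
    (hτ0 : ∀ ω, τ 0 ω = ω) (hτadd : ∀ p q ω, τ (p + q) ω = τ p (τ q ω))
    (hτ : ∀ p, Measure.QuasiMeasurePreserving (τ p) μ μ) : AddSubgroup G where
  carrier := {p | τ p ⁻¹' A =ᵐ[μ] A}
  zero_mem' := by
    have : τ 0 ⁻¹' A = A := by ext ω; simp [hτ0]
    simp only [mem_ofPred_eq, this]; rfl
  add_mem' {p q} hp hq := by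
    have : τ (p + q) ⁻¹' A = τ q ⁻¹' (τ p ⁻¹' A) := by ext ω; simp [hτadd]
    simpa only [mem_ofPred_eq, this] using ((hτ q).preimage_ae_eq hp).trans hq
  neg_mem' {p} hp := by
    have : τ (-p) ⁻¹' (τ p ⁻¹' A) = A := by ext ω; simp [← hτadd, hτ0]
    simpa only [mem_ofPred_eq, this] using ((hτ (-p)).preimage_ae_eq hp).symm

end InvariantShifts

theorem AddSubgroup.eq_top_of_forall_pos_ae_mem {E : Type*} [AddGroup E] [MeasurableSpace E]
    [MeasurableAdd E] {ν : Measure E} [ν.IsAddLeftInvariant] [NeZero ν]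
    (H : AddSubgroup (ℝ × E)) (hH : ∀ t : ℝ, 0 < t → ∀ᵐ x ∂ν, (t, x) ∈ H) : H = ⊤ := by
  refine eq_top_iff.2 fun ⟨t, z⟩ _ => ?_
  have ht₁ : 0 < max t 0 + 1 := by positivity
  have ht₂ : 0 < max t 0 + 1 - t := by linarith [le_max_left t 0]
  have hshift : ∀ᵐ x ∂ν, (max t 0 + 1, z + x) ∈ H :=
    (measurePreserving_add_left ν z).quasiMeasurePreserving.ae (hH _ ht₁)
  obtain ⟨x, h₁, h₂⟩ := (hshift.and (hH _ ht₂)).exists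
  simpa using H.sub_mem h₁ h₂

section Averaging

variable {X : Type*} [MeasurableSpace X] {ν : Measure X} {q : X → ℝ}

theorem measure_eq_zero_of_setIntegral_eq_zero (hq : ∀ x, 0 < q x) (hqi : Integrable q ν)
    {s : Set X} (hs : ∫ x in s, q x ∂ν = 0) : ν s = 0 := by
  by_contra hνs
  have hpos := (setIntegral_pos_iff_support_of_nonneg_ae (s := s)
    (ae_of_all _ fun x => (hq x).le) hqi.integrableOn).2
  simp only [Function.support_eq_univ fun x => (hq x).ne', univ_inter] at hpos
  exact (hpos (pos_iff_ne_zero.2 hνs)).ne' hs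

theorem ae_mem_iff_of_integral_indicator_mul_eq (hq : ∀ x, 0 < q x) (hqi : Integrable q ν)
    (hq1 : ∫ x, q x ∂ν = 1) {Ω : Type*} {A : Set Ω} {f : X → Ω} (hf : MeasurableSet (f ⁻¹' A))
    {ω : Ω} (h : ∫ x, A.indicator (fun _ => (1 : ℝ)) (f x) * q x ∂ν = A.indicator (fun _ => 1) ω) :
    ∀ᵐ x ∂ν, (f x ∈ A ↔ ω ∈ A) := by
  have hset : ∫ x in f ⁻¹' A, q x ∂ν = A.indicator (fun _ => 1) ω := by
    rw [← h, ← integral_indicator hf]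
    congr 1 with x
    by_cases hx : f x ∈ A <;> simp [hx]
  by_cases hω : ω ∈ A
  · rw [indicator_of_mem hω] at hset
    have hcompl : ∫ x in (f ⁻¹' A)ᶜ, q x ∂ν = 0 := by
      linarith [integral_add_compl hf hqi]
    filter_upwards [compl_mem_ae_iff.2 (measure_eq_zero_of_setIntegral_eq_zero hq hqi hcompl)]
      with x hx
    simpa [hω] using hx
  · rw [indicator_of_notMem hω] at hset
    filter_upwards
      [measure_eq_zero_iff_ae_notMem.1 (measure_eq_zero_of_setIntegral_eq_zero hq hqi hset)]
      with x hx
    simpa [hω] using hx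

theorem ae_preimage_ae_eq_of_integral_indicator_mul_eq [SFinite ν] (hq : ∀ x, 0 < q x)
    (hqi : Integrable q ν) (hq1 : ∫ x, q x ∂ν = 1) {Ω : Type*} [MeasurableSpace Ω]
    {μ : Measure Ω} [SFinite μ] {A : Set Ω} (hA : MeasurableSet A) {T : X → Ω → Ω}
    (hT : Measurable fun z : X × Ω => T z.1 z.2)
    (h : ∀ᵐ ω ∂μ,
      ∫ x, A.indicator (fun _ => (1 : ℝ)) (T x ω) * q x ∂ν = A.indicator (fun _ => 1) ω) :
    ∀ᵐ x ∂ν, T x ⁻¹' A =ᵐ[μ] A := by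
  have hae : ∀ᵐ ω ∂μ, ∀ᵐ x ∂ν, (T x ω ∈ A ↔ ω ∈ A) := h.mono fun ω hω =>
    ae_mem_iff_of_integral_indicator_mul_eq hq hqi hq1
      (hT.comp (measurable_id.prodMk measurable_const) hA) hω
  rw [Measure.ae_ae_comm] at hae
  · exact hae.mono fun x hx => eventuallyEq_set.2 hx
  · exact (hT.comp measurable_swap hA).iff (measurable_fst hA)

end Averaging

section HeatKernel

variable {d : ℕ} {s : ℝ}

noncomputable def heatKernel (d : ℕ) (s : ℝ) (x : EuclideanSpace ℝ (Fin d)) : ℝ :=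
  (2 * Real.pi * s) ^ (-(d : ℝ) / 2) * Real.exp (-‖x‖ ^ 2 / (2 * s))

theorem heatKernel_pos (hs : 0 < s) (x : EuclideanSpace ℝ (Fin d)) : 0 < heatKernel d s x := by
  unfold heatKernel; positivity

theorem integral_heatKernel (hs : 0 < s) : ∫ x, heatKernel d s x = 1 := by
  have hexp : ∀ x : EuclideanSpace ℝ (Fin d),
      Real.exp (-‖x‖ ^ 2 / (2 * s)) = Real.exp (-(2 * s)⁻¹ * ‖x‖ ^ 2) := fun x => by
    rw [neg_div, div_eq_inv_mul, neg_mul]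
  have h2πs : (0 : ℝ) < 2 * Real.pi * s := by positivity
  simp only [heatKernel, hexp]
  rw [integral_const_mul, GaussianFourier.integral_rexp_neg_mul_sq_norm (by positivity),
    finrank_euclideanSpace_fin, div_inv_eq_mul, show Real.pi * (2 * s) = 2 * Real.pi * s by ring,
    ← Real.rpow_add h2πs, neg_div, neg_add_cancel, Real.rpow_zero]

theorem integrable_heatKernel (hs : 0 < s) : Integrable (heatKernel d s) :=
  .of_integral_ne_zero (by simp [integral_heatKernel hs])

end HeatKernel

theorem stmt10_general (d : ℕ)
    {Ω : Type*} [MeasurableSpace Ω] (μ : Measure Ω) [IsProbabilityMeasure μ]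
    (τ : ℝ × EuclideanSpace ℝ (Fin d) → Ω → Ω)
    (hgrp0 : ∀ ω, τ 0 ω = ω)
    (hgrp : ∀ p q ω, τ (p + q) ω = τ p (τ q ω))
    (hmp : ∀ p, MeasurePreserving (τ p) μ μ)
    (hτmeas : Measurable (fun q : (ℝ × EuclideanSpace ℝ (Fin d)) × Ω => τ q.1 q.2))
    (herg : ∀ S : Set Ω, MeasurableSet S →
      (∀ p, μ (symmDiff S (τ p ⁻¹' S)) = 0) → μ S = 0 ∨ μ S = 1)
    (c : ℝ) (hc : 0 < c)
    (A : Set Ω) (hA : MeasurableSet A)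
    (hInv : ∀ s : ℝ, 0 < s → ∀ᵐ ω ∂μ,
      (∫ x : EuclideanSpace ℝ (Fin d),
        Set.indicator A (fun _ => (1:ℝ)) (τ (c * s, x) ω) *
          ((2 * Real.pi * s) ^ (-(d : ℝ) / 2) * Real.exp (-‖x‖ ^ 2 / (2 * s)))) =
        Set.indicator A (fun _ => (1:ℝ)) ω) :
    (∀ p : ℝ × EuclideanSpace ℝ (Fin d), ∀ᵐ ω ∂μ,
        Set.indicator A (fun _ => (1:ℝ)) (τ p ω) = Set.indicator A (fun _ => (1:ℝ)) ω) ∧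
    (μ A = 0 ∨ μ A = 1) := by
  set H := aeInvariantShifts τ μ A hgrp0 hgrp fun p => (hmp p).quasiMeasurePreserving
  have hpos : ∀ t : ℝ, 0 < t → ∀ᵐ x ∂(volume : Measure (EuclideanSpace ℝ (Fin d))), (t, x) ∈ H := by
    intro t ht
    have hs : 0 < t / c := div_pos ht hc
    have hT : Measurable fun z : EuclideanSpace ℝ (Fin d) × Ω => τ (c * (t / c), z.1) z.2 :=
      hτmeas.comp ((measurable_const.prodMk measurable_fst).prodMk measurable_snd)
    have h := ae_preimage_ae_eq_of_integral_indicator_mul_eq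
      (heatKernel_pos hs) (integrable_heatKernel hs) (integral_heatKernel hs) hA hT (hInv _ hs)
    rwa [mul_div_cancel₀ t hc.ne'] at h
  have hinv : ∀ p, τ p ⁻¹' A =ᵐ[μ] A := fun p =>
    (AddSubgroup.eq_top_of_forall_pos_ae_mem H hpos ▸ AddSubgroup.mem_top p :)
  refine ⟨fun p => (eventuallyEq_set.1 (hinv p)).mono fun ω hω => ?_,
    herg A hA fun p => measure_symmDiff_eq_zero_iff.2 (hinv p).symm⟩
  by_cases hωA : ω ∈ A <;> simp [hωA, show τ p ω ∈ A ↔ ω ∈ A from hω]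

theorem stmt10 (d : ℕ)
    {Ω : Type*} [MeasurableSpace Ω] (μ : Measure Ω) [IsProbabilityMeasure μ]
    (τ : ℝ × EuclideanSpace ℝ (Fin d) → Ω → Ω)
    (hgrp0 : ∀ ω, τ 0 ω = ω)
    (hgrp : ∀ p q ω, τ (p + q) ω = τ p (τ q ω))
    (hmp : ∀ p, MeasurePreserving (τ p) μ μ)
    (hτmeas : Measurable (fun q : (ℝ × EuclideanSpace ℝ (Fin d)) × Ω => τ q.1 q.2))
    (hcont : ∀ S : Set Ω, MeasurableSet S →
      Tendsto (fun p : ℝ × EuclideanSpace ℝ (Fin d) => μ (symmDiff S (τ p ⁻¹' S)))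
        (nhds 0) (nhds 0))
    (herg : ∀ S : Set Ω, MeasurableSet S →
      (∀ p, μ (symmDiff S (τ p ⁻¹' S)) = 0) → μ S = 0 ∨ μ S = 1)
    (c : ℝ) (hc : 0 < c)
    (A : Set Ω) (hA : MeasurableSet A)
    (hInv : ∀ s : ℝ, 0 < s → ∀ᵐ ω ∂μ,
      (∫ x : EuclideanSpace ℝ (Fin d),
        Set.indicator A (fun _ => (1:ℝ)) (τ (c * s, x) ω) *
          ((2 * Real.pi * s) ^ (-(d : ℝ) / 2) * Real.exp (-‖x‖ ^ 2 / (2 * s)))) =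
        Set.indicator A (fun _ => (1:ℝ)) ω) :
    (∀ p : ℝ × EuclideanSpace ℝ (Fin d), ∀ᵐ ω ∂μ,
        Set.indicator A (fun _ => (1:ℝ)) (τ p ω) = Set.indicator A (fun _ => (1:ℝ)) ω) ∧
    (μ A = 0 ∨ μ A = 1) :=
  stmt10_general d μ τ hgrp0 hgrp hmp hτmeas herg c hc A hA hInv
end

section
/- Let V : ℝ × ℝ^d × Ω → ℝ be a stationary random field with covariance R(t,x), bounded so that sup_{t,x} |R(t,x)| < ∞, and satisfying ∫_ℝ sup_{x ∈ ℝ^d} |R(t,x)| dt < ∞. Let N ∼ t ε^{γ₁ − 2} intervals J_k = [(k−1)Δt + ε^{−γ₁}, kΔt] with Δt = ε^{−γ₁} + ε^{−γ₂}, 0 < γ₂ < γ₁ < 2. Assume additionally sup_x |R(s,x)| ≤ C s^{−λ} for s ≥ 1, with λ > 2/γ₁. Then for any continuous path b : [0,∞) → ℝ^d, E[(ε Σ_{k=1}^N ∫_{J_k} V(s, b(s)) ds)²] → 0 as ε → 0⁺. -/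
/-!
Expanding the square and using Fubini, the second moment equals
`ε² ∑_{m,n} ∫_{J_m} ∫_{J_n} Q(s, u)`, where `Q(s, u) = E[V(s, b s) V(u, b u)] = R(s - u, b s - b u)`
is bounded by `g (s - u)` and by `g (u - s)`. A diagonal term is at most `|J_m| ∫ g = ε^{-γ₂} ∫ g`.
Distinct blocks are separated by a gap of length `ε^{-γ₁} ≥ 1`, so off the diagonal the decay of
`g` gives `|Q| ≤ Cg ε^{γ₁ λ}`. With `N ≤ t ε^{γ₁ - 2}` blocks the second moment is therefore at most
`t ε^{γ₁ - γ₂} ∫ g + t² Cg ε^{γ₁ λ + 2γ₁ - 2γ₂ - 2}`, and both exponents are positive.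
-/

open MeasureTheory Filter Set Function Topology

theorem integral_integral_swap_of_abs_le {α β : Type*} [MeasurableSpace α] [MeasurableSpace β]
    {μ : Measure α} {ν : Measure β} [IsFiniteMeasure μ] [IsFiniteMeasure ν] {F : α → β → ℝ}
    (hF : StronglyMeasurable (uncurry F)) {C : ℝ} (hC : ∀ x y, |F x y| ≤ C) :
    ∫ x, ∫ y, F x y ∂ν ∂μ = ∫ y, ∫ x, F x y ∂μ ∂ν :=
  integral_integral_swap <|
    Integrable.of_bound hF.aestronglyMeasurable C (ae_of_all _ fun p => hC p.1 p.2)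

section SecondMoment

variable {α Ω : Type*} [MeasurableSpace α] [MeasurableSpace Ω] {ν : Measure α} {μ : Measure Ω}
  [IsFiniteMeasure μ] {f : α → Ω → ℝ} {K : ℝ}

theorem stronglyMeasurable_setIntegral_of_measurable_uncurry [SFinite ν]
    (hf : Measurable (uncurry f)) (A : Set α) : StronglyMeasurable fun ω => ∫ s in A, f s ω ∂ν :=
  (hf.comp measurable_swap).stronglyMeasurable.integral_prod_right'

theorem integral_setIntegral_mul_setIntegral (hf : Measurable (uncurry f))
    (hbd : ∀ s ω, |f s ω| ≤ K) {A B : Set α} (hA : ν A < ⊤) (hB : ν B < ⊤) :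
    ∫ ω, (∫ s in A, f s ω ∂ν) * (∫ u in B, f u ω ∂ν) ∂μ
      = ∫ s in A, ∫ u in B, ∫ ω, f s ω * f u ω ∂μ ∂ν ∂ν := by
  have : IsFiniteMeasure (ν.restrict A) := isFiniteMeasure_restrict.mpr hA.ne
  have : IsFiniteMeasure (ν.restrict B) := isFiniteMeasure_restrict.mpr hB.ne
  have hprod : ∀ s u ω, |f s ω * f u ω| ≤ K * K := fun s u ω => by
    rw [abs_mul]
    exact mul_le_mul (hbd s ω) (hbd u ω) (abs_nonneg _) ((abs_nonneg _).trans (hbd s ω))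
  have hmeas : Measurable fun p : (α × α) × Ω => f p.1.1 p.2 * f p.1.2 p.2 :=
    (hf.comp (measurable_fst.fst.prodMk measurable_snd)).mul
      (hf.comp (measurable_fst.snd.prodMk measurable_snd))
  calc ∫ ω, (∫ s in A, f s ω ∂ν) * (∫ u in B, f u ω ∂ν) ∂μ
      = ∫ ω, (∫ s in A, ∫ u in B, f s ω * f u ω ∂ν ∂ν) ∂μ := by
        simp_rw [integral_const_mul, integral_mul_const]
    _ = ∫ s in A, ∫ ω, (∫ u in B, f s ω * f u ω ∂ν) ∂μ ∂ν := by
        refine integral_integral_swap_of_abs_le (C := K * K * ν.real B) ?_ fun ω s => ?_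
        · exact (hmeas.comp ((measurable_fst.snd.prodMk measurable_snd).prodMk
            measurable_fst.fst)).stronglyMeasurable.integral_prod_right'
        · exact norm_setIntegral_le_of_norm_le_const (f := fun u => f s ω * f u ω) hB
            fun u _ => hprod s u ω
    _ = ∫ s in A, ∫ u in B, ∫ ω, f s ω * f u ω ∂μ ∂ν ∂ν := by
        refine integral_congr_ae (ae_of_all _ fun s => ?_)
        exact integral_integral_swap_of_abs_le (F := fun ω u => f s ω * f u ω)
          ((hmeas.comp ((measurable_const.prodMk measurable_snd).prodMk
            measurable_fst)).stronglyMeasurable) fun ω u => hprod s u ω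

theorem integral_sq_mul_sum_setIntegral [SFinite ν] (hf : Measurable (uncurry f))
    (hbd : ∀ s ω, |f s ω| ≤ K) {ι : Type*} (I : Finset ι) {J : ι → Set α}
    (hJ : ∀ k, ν (J k) < ⊤) (c : ℝ) :
    ∫ ω, (c * ∑ k ∈ I, ∫ s in J k, f s ω ∂ν) ^ 2 ∂μ
      = c ^ 2 * ∑ m ∈ I, ∑ n ∈ I, ∫ s in J m, ∫ u in J n, ∫ ω, f s ω * f u ω ∂μ ∂ν ∂ν := by
  have hblock : ∀ k ω, |∫ s in J k, f s ω ∂ν| ≤ K * ν.real (J k) := fun k ω =>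
    norm_setIntegral_le_of_norm_le_const (f := (f · ω)) (hJ k) fun s _ => hbd s ω
  have hint : ∀ m n, Integrable (fun ω => (∫ s in J m, f s ω ∂ν) * (∫ u in J n, f u ω ∂ν)) μ :=
    fun m n => Integrable.of_bound
      ((stronglyMeasurable_setIntegral_of_measurable_uncurry hf _).mul
        (stronglyMeasurable_setIntegral_of_measurable_uncurry hf _)).aestronglyMeasurable
      _ (ae_of_all _ fun ω => by
        rw [Real.norm_eq_abs, abs_mul]
        exact mul_le_mul (hblock m ω) (hblock n ω) (abs_nonneg _)
          ((abs_nonneg _).trans (hblock m ω)))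
  simp_rw [mul_pow, sq (∑ k ∈ I, _), Finset.sum_mul_sum, integral_const_mul]
  rw [integral_finsetSum _ fun m _ => integrable_finsetSum _ fun n _ => hint m n]
  congr 1
  refine Finset.sum_congr rfl fun m _ => ?_
  rw [integral_finsetSum _ fun n _ => hint m n]
  exact Finset.sum_congr rfl fun n _ => integral_setIntegral_mul_setIntegral hf hbd (hJ m) (hJ n)

end SecondMoment

theorem abs_setIntegral_setIntegral_le {α β : Type*} [MeasurableSpace α] [MeasurableSpace β]
    {μ : Measure α} {ν : Measure β} {Q : α → β → ℝ} {A : Set α} {B : Set β} (hA : μ A < ⊤)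
    (hB : ν B < ⊤) {C : ℝ} (hC : ∀ s ∈ A, ∀ u ∈ B, |Q s u| ≤ C) :
    |∫ s in A, ∫ u in B, Q s u ∂ν ∂μ| ≤ C * ν.real B * μ.real A :=
  norm_setIntegral_le_of_norm_le_const (f := fun s => ∫ u in B, Q s u ∂ν) hA fun s hs =>
    norm_setIntegral_le_of_norm_le_const (f := Q s) hB fun u hu => hC s hs u hu

theorem abs_setIntegral_setIntegral_le_integral_mul {Q : ℝ → ℝ → ℝ} {g : ℝ → ℝ}
    (hQ : ∀ s u, |Q s u| ≤ g (s - u)) (hg : Integrable g) {A : Set ℝ} (hA : volume A < ⊤)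
    (B : Set ℝ) : |∫ s in A, ∫ u in B, Q s u| ≤ (∫ x, g x) * volume.real A := by
  have hg0 : ∀ x, 0 ≤ g x := fun x => (abs_nonneg _).trans (by simpa using hQ x 0)
  refine norm_setIntegral_le_of_norm_le_const (f := fun s => ∫ u in B, Q s u) hA fun s _ => ?_
  calc ‖∫ u in B, Q s u‖ ≤ ∫ u in B, |Q s u| := norm_integral_le_integral_norm _
    _ ≤ ∫ u in B, g (s - u) :=
        integral_mono_of_nonneg (ae_of_all _ fun u => abs_nonneg _)
          (hg.comp_sub_left s).integrableOn (ae_of_all _ fun u => hQ s u)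
    _ ≤ ∫ u, g (s - u) := setIntegral_le_integral (hg.comp_sub_left s) (ae_of_all _ fun u => hg0 _)
    _ = ∫ x, g x := integral_sub_left_eq_self g volume s

theorem le_abs_sub_of_mem_blocks {a w : ℝ} (ha : 0 ≤ a) (hw : 0 ≤ w) {m n : ℕ} (hmn : m ≠ n)
    {s u : ℝ} (hs : s ∈ Ioc ((m - 1) * (a + w) + a) (m * (a + w)))
    (hu : u ∈ Ioc ((n - 1) * (a + w) + a) (n * (a + w))) : a ≤ |s - u| := by
  rcases hmn.lt_or_gt with h | h
  · have : (m : ℝ) + 1 ≤ n := by exact_mod_cast h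
    rw [abs_sub_comm]
    exact le_abs.mpr (Or.inl (by nlinarith [hs.2, hu.1]))
  · have : (n : ℝ) + 1 ≤ m := by exact_mod_cast h
    exact le_abs.mpr (Or.inl (by nlinarith [hs.1, hu.2]))

theorem sum_sum_le_of_diag_le_of_offDiag_le {ι : Type*} (I : Finset ι) (x : ι → ι → ℝ) {D E : ℝ}
    (hdiag : ∀ m ∈ I, x m m ≤ D) (hoff : ∀ m ∈ I, ∀ n ∈ I, m ≠ n → x m n ≤ E) (hE : 0 ≤ E) :
    ∑ m ∈ I, ∑ n ∈ I, x m n ≤ I.card * (D + I.card * E) := by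
  classical
  calc ∑ m ∈ I, ∑ n ∈ I, x m n ≤ ∑ m ∈ I, (D + I.card * E) := by
        refine Finset.sum_le_sum fun m hm => ?_
        rw [← Finset.add_sum_erase _ _ hm]
        refine add_le_add (hdiag m hm) ((Finset.sum_le_card_nsmul _ _ E fun n hn => ?_).trans ?_)
        · exact hoff m hm n (Finset.mem_of_mem_erase hn) (Finset.ne_of_mem_erase hn).symm
        · rw [nsmul_eq_mul]
          gcongr
          exact Finset.erase_subset m I
    _ = I.card * (D + I.card * E) := by rw [Finset.sum_const, nsmul_eq_mul]

theorem integral_sq_mul_sum_blocks_le {Ω : Type*} [MeasurableSpace Ω] {μ : Measure Ω}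
    [IsFiniteMeasure μ] {f : ℝ → Ω → ℝ} (hf : Measurable (uncurry f)) {K : ℝ}
    (hbd : ∀ s ω, |f s ω| ≤ K) {g : ℝ → ℝ} (hg : Integrable g)
    (hcov : ∀ s u, |∫ ω, f s ω * f u ω ∂μ| ≤ g (s - u)) {a w C : ℝ} (ha : 0 ≤ a) (hw : 0 ≤ w)
    (hC : ∀ x, a ≤ x → g x ≤ C) (c : ℝ) (N : ℕ) :
    ∫ ω, (c * ∑ k ∈ Finset.Icc 1 N, ∫ s in ((k : ℝ) - 1) * (a + w) + a..k * (a + w), f s ω) ^ 2 ∂μ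
      ≤ c ^ 2 * (N * ((∫ x, g x) * w + N * (w * w * C))) := by
  set Q : ℝ → ℝ → ℝ := fun s u => ∫ ω, f s ω * f u ω ∂μ
  set J : ℕ → Set ℝ := fun k => Ioc (((k : ℝ) - 1) * (a + w) + a) (k * (a + w))
  have hJ_le : ∀ k : ℕ, ((k : ℝ) - 1) * (a + w) + a ≤ k * (a + w) := fun k => by linarith
  have hJ_real : ∀ k, volume.real (J k) = w := fun k => by
    rw [Real.volume_real_Ioc_of_le (hJ_le k)]; ring
  have hJ_fin : ∀ k, volume (J k) < ⊤ := fun k => measure_Ioc_lt_top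
  have hQ_abs : ∀ s u, |Q s u| ≤ g |s - u| := fun s u => by
    rcases abs_choice (s - u) with h | h
    · rw [h]; exact hcov s u
    · simp only [Q, h, neg_sub, mul_comm (f s _)]; exact hcov u s
  have hC0 : 0 ≤ C := ((abs_nonneg _).trans (hcov a 0)).trans (hC _ (sub_zero a).ge)
  have hcard : ((Finset.Icc 1 N).card : ℝ) = N := by simp
  simp_rw [intervalIntegral.integral_of_le (hJ_le _)]
  rw [integral_sq_mul_sum_setIntegral hf hbd _ hJ_fin, ← hcard]
  gcongr
  refine sum_sum_le_of_diag_le_of_offDiag_le _ _ (fun m _ => ?_) (fun m _ n _ hmn => ?_)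
    (by positivity : 0 ≤ w * w * C)
  · rw [← hJ_real m]
    exact (le_abs_self _).trans (abs_setIntegral_setIntegral_le_integral_mul hcov hg (hJ_fin m) _)
  · calc _ ≤ C * volume.real (J n) * volume.real (J m) :=
          (le_abs_self _).trans <| abs_setIntegral_setIntegral_le (hJ_fin m) (hJ_fin n)
            fun s hs u hu => (hQ_abs s u).trans (hC _ (le_abs_sub_of_mem_blocks ha hw hmn hs hu))
      _ = w * w * C := by rw [hJ_real, hJ_real]; ring

section Scaling

variable {ε t γ₁ γ₂ : ℝ}

theorem natFloor_blockCount_le (hε : 0 < ε) (ht : 0 ≤ t) :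
    (⌊t / (ε ^ 2 * (ε ^ (-γ₁) + ε ^ (-γ₂)))⌋₊ : ℝ) ≤ t * ε ^ (γ₁ - 2) := by
  have hε2 : ε ^ 2 * ε ^ (-γ₁) = (ε ^ (γ₁ - 2))⁻¹ := by
    rw [← Real.rpow_natCast, ← Real.rpow_add hε, ← Real.rpow_neg hε.le]
    congr 1; push_cast; ring
  calc (⌊t / (ε ^ 2 * (ε ^ (-γ₁) + ε ^ (-γ₂)))⌋₊ : ℝ)
      ≤ t / (ε ^ 2 * (ε ^ (-γ₁) + ε ^ (-γ₂))) := Nat.floor_le (by positivity)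
    _ ≤ t / (ε ^ 2 * ε ^ (-γ₁)) := by gcongr; linarith [Real.rpow_pos_of_pos hε (-γ₂)]
    _ = t * ε ^ (γ₁ - 2) := by rw [hε2, div_inv_eq_mul]

theorem blockBound_le_rpow {lam G Cg : ℝ} {N : ℕ} (hε : 0 < ε) (hN : (N : ℝ) ≤ t * ε ^ (γ₁ - 2))
    (hG : 0 ≤ G) (hCg : 0 ≤ Cg) :
    ε ^ 2 * (N * (G * ε ^ (-γ₂) + N * (ε ^ (-γ₂) * ε ^ (-γ₂) * (Cg * (ε ^ (-γ₁)) ^ (-lam)))))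
      ≤ t * G * ε ^ (γ₁ - γ₂) + t ^ 2 * Cg * ε ^ (γ₁ * lam + 2 * γ₁ - 2 * γ₂ - 2) := by
  have hdiag : ε ^ 2 * ε ^ (γ₁ - 2) * ε ^ (-γ₂) = ε ^ (γ₁ - γ₂) := by
    rw [← Real.rpow_natCast, ← Real.rpow_add hε, ← Real.rpow_add hε]
    congr 1; push_cast; ring
  have hoff : ε ^ 2 * ε ^ (γ₁ - 2) * ε ^ (γ₁ - 2) * ε ^ (-γ₂) * ε ^ (-γ₂) * (ε ^ (-γ₁)) ^ (-lam)
      = ε ^ (γ₁ * lam + 2 * γ₁ - 2 * γ₂ - 2) := by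
    rw [← Real.rpow_mul hε.le, ← Real.rpow_natCast]
    simp only [← Real.rpow_add hε]
    congr 1; push_cast; ring
  calc _ ≤ ε ^ 2 * (t * ε ^ (γ₁ - 2) * (G * ε ^ (-γ₂) + t * ε ^ (γ₁ - 2) *
          (ε ^ (-γ₂) * ε ^ (-γ₂) * (Cg * (ε ^ (-γ₁)) ^ (-lam))))) := by
          gcongr; exact (Nat.cast_nonneg N).trans hN
    _ = _ := by rw [← hdiag, ← hoff]; ring

end Scaling

theorem tendsto_rpow_nhdsGT_zero_zero {p : ℝ} (hp : 0 < p) :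
    Tendsto (fun ε : ℝ => ε ^ p) (𝓝[>] 0) (𝓝 0) := by
  simpa [Real.zero_rpow hp.ne'] using
    ((Real.continuous_rpow_const hp.le).tendsto 0).mono_left nhdsWithin_le_nhds

theorem le_mul_rpow_neg_of_decay {g : ℝ → ℝ} {Cg lam : ℝ}
    (hdecay : ∀ s : ℝ, 1 ≤ s → g s ≤ Cg * s ^ (-lam)) (hCg : 0 ≤ Cg) (hlam : 0 ≤ lam) {a x : ℝ}
    (ha : 1 ≤ a) (hx : a ≤ x) : g x ≤ Cg * a ^ (-lam) :=
  (hdecay x (ha.trans hx)).trans <| mul_le_mul_of_nonneg_left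
    (Real.rpow_le_rpow_of_nonpos (by linarith) hx (neg_nonpos.mpr hlam)) hCg

theorem stmt11_general (d : ℕ)
    {Ω : Type*} [MeasurableSpace Ω] (μ : Measure Ω) [IsProbabilityMeasure μ]
    (V : ℝ → EuclideanSpace ℝ (Fin d) → Ω → ℝ)
    (hVmeas : Measurable (fun q : (ℝ × EuclideanSpace ℝ (Fin d)) × Ω => V q.1.1 q.1.2 q.2))
    (K : ℝ) (hVbd : ∀ s x ω, |V s x ω| ≤ K)
    (R : ℝ → EuclideanSpace ℝ (Fin d) → ℝ)
    (hcov : ∀ s x u y, ∫ ω, V s x ω * V u y ω ∂μ = R (s - u) (x - y))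
    (g : ℝ → ℝ) (hg : ∀ s x, |R s x| ≤ g s) (hgint : Integrable g)
    (γ₁ γ₂ lam Cg t : ℝ) (hγ₂ : 0 < γ₂) (hγ12 : γ₂ < γ₁)
    (hlam : 2 / γ₁ < lam) (hdecay : ∀ s : ℝ, 1 ≤ s → g s ≤ Cg * s ^ (-lam))
    (ht : 0 < t)
    (b : ℝ → EuclideanSpace ℝ (Fin d)) (hb : Continuous b) :
    Tendsto (fun ε : ℝ =>
        ∫ ω, (ε * ∑ k ∈ Finset.Icc 1 ⌊t / (ε ^ 2 * (ε ^ (-γ₁) + ε ^ (-γ₂)))⌋₊,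
          ∫ s in (((k : ℝ) - 1) * (ε ^ (-γ₁) + ε ^ (-γ₂)) + ε ^ (-γ₁))..
              ((k : ℝ) * (ε ^ (-γ₁) + ε ^ (-γ₂))),
            V s (b s) ω) ^ 2 ∂μ)
      (nhdsWithin 0 (Set.Ioi 0)) (nhds 0) := by
  have hγ₁ : 0 < γ₁ := hγ₂.trans hγ12
  have hγlam : 2 < γ₁ * lam := by rwa [div_lt_iff₀ hγ₁, mul_comm] at hlam
  have hlam_nonneg : 0 ≤ lam := (div_pos two_pos hγ₁).le.trans hlam.le
  have hg0 : ∀ x, 0 ≤ g x := fun x => (abs_nonneg _).trans (hg x 0)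
  have hCg : 0 ≤ Cg := by simpa using (hg0 1).trans (hdecay 1 le_rfl)
  have hf : Measurable (uncurry fun s ω => V s (b s) ω) :=
    hVmeas.comp ((measurable_fst.prodMk (hb.measurable.comp measurable_fst)).prodMk measurable_snd)
  have hQ : ∀ s u, |∫ ω, V s (b s) ω * V u (b u) ω ∂μ| ≤ g (s - u) := fun s u => by
    rw [hcov]; exact hg _ _
  have hlimit : Tendsto (fun ε : ℝ => t * (∫ x, g x) * ε ^ (γ₁ - γ₂)
      + t ^ 2 * Cg * ε ^ (γ₁ * lam + 2 * γ₁ - 2 * γ₂ - 2)) (𝓝[>] 0) (𝓝 0) := by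
    simpa using ((tendsto_rpow_nhdsGT_zero_zero (sub_pos.mpr hγ12)).const_mul _).add
      ((tendsto_rpow_nhdsGT_zero_zero (by linarith : 0 < γ₁ * lam + 2 * γ₁ - 2 * γ₂ - 2)).const_mul
        (t ^ 2 * Cg))
  refine squeeze_zero' (Eventually.of_forall fun ε => integral_nonneg fun ω => sq_nonneg _) ?_
    hlimit
  filter_upwards [Ioo_mem_nhdsGT one_pos] with ε ⟨hε0, hε1⟩
  have ha : 1 ≤ ε ^ (-γ₁) := Real.one_le_rpow_of_pos_of_le_one_of_nonpos hε0 hε1.le (by linarith)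
  exact (integral_sq_mul_sum_blocks_le hf (fun s ω => hVbd _ _ _) hgint hQ (zero_le_one.trans ha)
    (Real.rpow_pos_of_pos hε0 _).le (fun x => le_mul_rpow_neg_of_decay hdecay hCg hlam_nonneg ha)
    ε _).trans
    (blockBound_le_rpow hε0 (natFloor_blockCount_le hε0 ht.le) (integral_nonneg hg0) hCg)

/-- Vanishing of the second moment of the contributions of the intervals
`J_k = [(k-1)Δt + ε^{-γ₁}, kΔt]`, `Δt = ε^{-γ₁} + ε^{-γ₂}`, `N ~ t ε^{γ₁-2}`,
for a frozen continuous path `b`, under integrability of `sup_x |R(·,x)|` and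
the polynomial decay `sup_x |R(s,x)| ≤ C s^{-λ}` with `λ > 2/γ₁`. -/
theorem stmt11 (d : ℕ)
    {Ω : Type*} [MeasurableSpace Ω] (μ : Measure Ω) [IsProbabilityMeasure μ]
    (V : ℝ → EuclideanSpace ℝ (Fin d) → Ω → ℝ)
    (hVmeas : Measurable (fun q : (ℝ × EuclideanSpace ℝ (Fin d)) × Ω => V q.1.1 q.1.2 q.2))
    (K : ℝ) (hVbd : ∀ s x ω, |V s x ω| ≤ K)
    (R : ℝ → EuclideanSpace ℝ (Fin d) → ℝ)
    (hcov : ∀ s x u y, ∫ ω, V s x ω * V u y ω ∂μ = R (s - u) (x - y))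
    (g : ℝ → ℝ) (hg : ∀ s x, |R s x| ≤ g s) (hgint : Integrable g)
    (γ₁ γ₂ lam Cg t : ℝ) (hγ₂ : 0 < γ₂) (hγ12 : γ₂ < γ₁) (hγ₁ : γ₁ < 2)
    (hlam : 2 / γ₁ < lam) (hdecay : ∀ s : ℝ, 1 ≤ s → g s ≤ Cg * s ^ (-lam))
    (ht : 0 < t)
    (b : ℝ → EuclideanSpace ℝ (Fin d)) (hb : Continuous b) :
    Tendsto (fun ε : ℝ =>
        ∫ ω, (ε * ∑ k ∈ Finset.Icc 1 ⌊t / (ε ^ 2 * (ε ^ (-γ₁) + ε ^ (-γ₂)))⌋₊,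
          ∫ s in (((k : ℝ) - 1) * (ε ^ (-γ₁) + ε ^ (-γ₂)) + ε ^ (-γ₁))..
              ((k : ℝ) * (ε ^ (-γ₁) + ε ^ (-γ₂))),
            V s (b s) ω) ^ 2 ∂μ)
      (nhdsWithin 0 (Set.Ioi 0)) (nhds 0) :=
  stmt11_general d μ V hVmeas K hVbd R hcov g hg hgint γ₁ γ₂ lam Cg t hγ₂ hγ12 hlam hdecay ht b hb
end

section
/- Let R : ℝ × ℝ^d → ℝ be continuous, bounded, with ∫₀^∞ sup_x |R(u,x)| du < ∞. Let b¹, b² : [0,t] → ℝ^d be continuous paths. Define, for ε > 0, F(ε) = ε^{−2} ∫₀^t ∫₀^t R((s−u)/ε², b¹(s) − b²(u)) ds du. Then F(ε) → ∫₀^t 𝓡(b¹(s) − b²(s)) ds as ε → 0⁺, where 𝓡(x) = ∫_ℝ R(u,x) du and R(−u,x) is interpreted via R being extended evenly, i.e., assuming R(u,x) = R(−u,−x). -/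
/-!
Substituting `u = s - c v` with `c = ε²` turns `c⁻¹ ∫₀ᵗ R((s - u)/c, b₁ s - b₂ u) du` into the
integral of `v ↦ R(v, b₁ s - b₂ (s - c v))` over the window `[(s - t)/c, s/c]`. For `0 < s < t` the
window exhausts `ℝ` as `c → 0⁺` and the integrand tends to `R(v, b₁ s - b₂ s)`, while the symmetry
`R(u, x) = R(-u, -x)` gives the integrable domination `|R(v, x)| ≤ g |v|`. The resulting bound
`∫ g(|v|) dv`, uniform in `s`, lets dominated convergence pass the limit through the outer integral.
-/

open MeasureTheory Filter Set Topology

theorem integrable_comp_abs_of_integrableOn_Ioi {E : Type*} [NormedAddCommGroup E] {f : ℝ → E}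
    (hf : IntegrableOn f (Ioi 0)) : Integrable fun x ↦ f |x| := by
  have hpos : IntegrableOn (fun x ↦ f |x|) (Ioi 0) :=
    hf.congr_fun (fun x hx ↦ by rw [abs_of_pos hx]) measurableSet_Ioi
  rw [← integrableOn_univ, ← Iio_union_Ici (a := 0), integrableOn_union,
    integrableOn_Ici_iff_integrableOn_Ioi]
  refine ⟨?_, hpos⟩
  rw [← (Measure.measurePreserving_neg volume).integrableOn_comp_preimage
    (Homeomorph.neg ℝ).measurableEmbedding]
  simpa [Function.comp_def] using hpos

variable {E : Type*} [NormedAddCommGroup E] [NormedSpace ℝ E]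

theorem intervalIntegral.integral_comp_sub_div₂ (F : ℝ → ℝ → E) {c : ℝ} (hc : c ≠ 0)
    (s a b : ℝ) :
    ∫ u in a..b, F ((s - u) / c) u = c • ∫ v in (s - b) / c..(s - a) / c, F v (s - c * v) := by
  calc ∫ u in a..b, F ((s - u) / c) u
      = ∫ u in a..b, (fun v ↦ F v (s - c * v)) (s / c - u / c) := by
        congr 1 with u
        rw [← sub_div]
        dsimp only
        rw [mul_div_cancel₀ _ hc, sub_sub_cancel]
    _ = _ := by rw [intervalIntegral.integral_comp_sub_div (fun v ↦ F v (s - c * v)) hc, sub_div,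
      sub_div]

theorem tendsto_intervalIntegral_of_dominated_of_tendsto_atBot_atTop {ι : Type*} {l : Filter ι}
    [l.IsCountablyGenerated] {F : ι → ℝ → E} {f : ℝ → E} {a b : ι → ℝ} (bound : ℝ → ℝ)
    (hF_meas : ∀ᶠ i in l, AEStronglyMeasurable (F i))
    (h_bound : ∀ᶠ i in l, ∀ᵐ v, ‖F i v‖ ≤ bound v) (bound_integrable : Integrable bound)
    (h_lim : ∀ᵐ v, Tendsto (fun i ↦ F i v) l (𝓝 (f v)))
    (ha : Tendsto a l atBot) (hb : Tendsto b l atTop) :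
    Tendsto (fun i ↦ ∫ v in a i..b i, F i v) l (𝓝 (∫ v, f v)) := by
  have h_eq : ∀ᶠ i in l, ∫ v, (Ioc (a i) (b i)).indicator (F i) v = ∫ v in a i..b i, F i v := by
    filter_upwards [ha.eventually_le_atBot 0, hb.eventually_ge_atTop 0] with i hai hbi
    rw [intervalIntegral.integral_of_le (hai.trans hbi), integral_indicator measurableSet_Ioc]
  refine (tendsto_integral_filter_of_dominated_convergence bound ?_ ?_ bound_integrable ?_).congr'
    h_eq
  · filter_upwards [hF_meas] with i hi using hi.indicator measurableSet_Ioc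
  · filter_upwards [h_bound] with i hi
    filter_upwards [hi] with v hv
    exact (norm_indicator_le_norm_self _ _).trans hv
  · filter_upwards [h_lim] with v hv
    refine hv.congr' ?_
    filter_upwards [ha.eventually_lt_atBot v, hb.eventually_ge_atTop v] with i hai hbi
    rw [indicator_of_mem (mem_Ioc.2 ⟨hai, hbi⟩)]

section Kernel

variable {X : Type*} {R : ℝ → X → E} {G : ℝ → ℝ}

theorem norm_inv_smul_integral_kernel_le [Nonempty X] (hG : Integrable G)
    (hRG : ∀ v x, ‖R v x‖ ≤ G v) (β : ℝ → X) {c t : ℝ} (hc : 0 < c) (ht : 0 ≤ t) (s : ℝ) :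
    ‖c⁻¹ • ∫ u in 0..t, R ((s - u) / c) (β u)‖ ≤ ∫ v, G v := by
  have hab : (s - t) / c ≤ (s - 0) / c := by gcongr
  rw [intervalIntegral.integral_comp_sub_div₂ (fun v u ↦ R v (β u)) hc.ne', inv_smul_smul₀ hc.ne']
  calc _ ≤ ∫ v in (s - t) / c..(s - 0) / c, G v :=
        intervalIntegral.norm_integral_le_of_norm_le hab (ae_of_all _ fun v _ ↦ hRG v _)
          hG.intervalIntegrable
    _ ≤ ∫ v, G v := by
        rw [intervalIntegral.integral_of_le hab]
        exact setIntegral_le_integral hG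
          (ae_of_all _ fun v ↦ (norm_nonneg _).trans (hRG v (Classical.arbitrary X)))

variable [TopologicalSpace X]

theorem tendsto_inv_smul_integral_kernel (hR : Continuous (Function.uncurry R)) (hG : Integrable G)
    (hRG : ∀ v x, ‖R v x‖ ≤ G v) {β : ℝ → X} (hβ : Continuous β) {s t : ℝ} (hs : s ∈ Ioo 0 t) :
    Tendsto (fun c ↦ c⁻¹ • ∫ u in 0..t, R ((s - u) / c) (β u)) (𝓝[>] 0)
      (𝓝 (∫ v, R v (β s))) := by
  have h_eq : ∀ᶠ c in 𝓝[>] (0 : ℝ), ∫ v in (s - t) / c..s / c, R v (β (s - c * v)) =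
      c⁻¹ • ∫ u in 0..t, R ((s - u) / c) (β u) := by
    filter_upwards [self_mem_nhdsWithin] with c hc
    rw [intervalIntegral.integral_comp_sub_div₂ (fun v u ↦ R v (β u)) hc.ne',
      inv_smul_smul₀ hc.ne', sub_zero]
  refine (tendsto_intervalIntegral_of_dominated_of_tendsto_atBot_atTop (a := fun c ↦ (s - t) / c)
    (b := fun c ↦ s / c) G ?_ ?_ hG ?_ ?_ ?_).congr' h_eq
  · exact Eventually.of_forall fun c ↦ (by fun_prop : Continuous _).aestronglyMeasurable
  · exact Eventually.of_forall fun c ↦ ae_of_all _ fun v ↦ hRG v _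
  · refine ae_of_all _ fun v ↦ ?_
    have hcont : Continuous fun c : ℝ ↦ R v (β (s - c * v)) := by fun_prop
    simpa using (hcont.tendsto 0).mono_left nhdsWithin_le_nhds
  · simp_rw [div_eq_mul_inv]
    exact tendsto_inv_nhdsGT_zero.const_mul_atTop_of_neg (by linarith [hs.2])
  · simp_rw [div_eq_mul_inv]
    exact tendsto_inv_nhdsGT_zero.const_mul_atTop hs.1

theorem tendsto_integral_inv_smul_integral_kernel [Nonempty X]
    (hR : Continuous (Function.uncurry R)) (hG : Integrable G) (hRG : ∀ v x, ‖R v x‖ ≤ G v) {B : ℝ → ℝ → X}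
    (hB : Continuous (Function.uncurry B)) {t : ℝ} (ht : 0 ≤ t) :
    Tendsto (fun c ↦ ∫ s in 0..t, c⁻¹ • ∫ u in 0..t, R ((s - u) / c) (B s u)) (𝓝[>] 0)
      (𝓝 (∫ s in 0..t, ∫ v, R v (B s s))) := by
  refine intervalIntegral.tendsto_integral_filter_of_dominated_convergence (fun _ ↦ ∫ v, G v)
    ?_ ?_ intervalIntegrable_const ?_
  · refine Eventually.of_forall fun c ↦ Continuous.aestronglyMeasurable (.const_smul ?_ _)
    exact intervalIntegral.continuous_parametric_intervalIntegral_of_continuous' (by fun_prop) 0 t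
  · filter_upwards [self_mem_nhdsWithin] with c hc
    exact ae_of_all _ fun s _ ↦ norm_inv_smul_integral_kernel_le hG hRG (B s) hc ht s
  · filter_upwards [Measure.ae_ne volume t] with s hst hs
    rw [uIoc_of_le ht] at hs
    exact tendsto_inv_smul_integral_kernel hR hG hRG (by fun_prop) ⟨hs.1, lt_of_le_of_ne hs.2 hst⟩

end Kernel

theorem stmt12_general (d : ℕ)
    (R : ℝ → EuclideanSpace ℝ (Fin d) → ℝ)
    (hRcont : Continuous (fun p : ℝ × EuclideanSpace ℝ (Fin d) => R p.1 p.2))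
    (g : ℝ → ℝ) (hg : ∀ u x, |R u x| ≤ g u)
    (hgint : IntegrableOn g (Set.Ioi 0))
    (hsymm : ∀ u x, R u x = R (-u) (-x))
    (t : ℝ) (ht : 0 < t)
    (b₁ b₂ : ℝ → EuclideanSpace ℝ (Fin d)) (hb₁ : Continuous b₁) (hb₂ : Continuous b₂) :
    Tendsto (fun ε : ℝ =>
        ε ^ (-2 : ℝ) * ∫ s in (0:ℝ)..t, ∫ u in (0:ℝ)..t, R ((s - u) / ε ^ 2) (b₁ s - b₂ u))
      (nhdsWithin 0 (Set.Ioi 0))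
      (nhds (∫ s in (0:ℝ)..t, ∫ u : ℝ, R u (b₁ s - b₂ s))) := by
  have hRg : ∀ v x, ‖R v x‖ ≤ g |v| := by
    intro v x
    rcases le_or_gt 0 v with hv | hv
    · rw [abs_of_nonneg hv]
      exact hg v x
    · rw [abs_of_neg hv, hsymm]
      exact hg (-v) (-x)
  have hsq : Tendsto (fun ε : ℝ ↦ ε ^ 2) (𝓝[>] 0) (𝓝[>] 0) :=
    tendsto_nhdsWithin_iff.2 ⟨((continuous_pow 2).tendsto' 0 0 (by norm_num)).mono_left
      nhdsWithin_le_nhds,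
      eventually_nhdsWithin_of_forall fun ε (hε : 0 < ε) ↦ pow_pos hε 2⟩
  refine ((tendsto_integral_inv_smul_integral_kernel hRcont
    (integrable_comp_abs_of_integrableOn_Ioi hgint) hRg (B := fun s u ↦ b₁ s - b₂ u)
    (by fun_prop) ht.le).comp hsq).congr' ?_
  filter_upwards [self_mem_nhdsWithin] with ε hε
  simp only [Function.comp_apply, smul_eq_mul, intervalIntegral.integral_const_mul,
    Real.rpow_neg hε.le, Real.rpow_two]

theorem stmt12 (d : ℕ)
    (R : ℝ → EuclideanSpace ℝ (Fin d) → ℝ)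
    (hRcont : Continuous (fun p : ℝ × EuclideanSpace ℝ (Fin d) => R p.1 p.2))
    (K : ℝ) (hRbd : ∀ u x, |R u x| ≤ K)
    (g : ℝ → ℝ) (hg : ∀ u x, |R u x| ≤ g u)
    (hgint : IntegrableOn g (Set.Ioi 0))
    (hsymm : ∀ u x, R u x = R (-u) (-x))
    (t : ℝ) (ht : 0 < t)
    (b₁ b₂ : ℝ → EuclideanSpace ℝ (Fin d)) (hb₁ : Continuous b₁) (hb₂ : Continuous b₂) :
    Tendsto (fun ε : ℝ =>
        ε ^ (-2 : ℝ) * ∫ s in (0:ℝ)..t, ∫ u in (0:ℝ)..t, R ((s - u) / ε ^ 2) (b₁ s - b₂ u))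
      (nhdsWithin 0 (Set.Ioi 0))
      (nhds (∫ s in (0:ℝ)..t, ∫ u : ℝ, R u (b₁ s - b₂ s))) :=
  stmt12_general d R hRcont g hg hgint hsymm t ht b₁ b₂ hb₁ hb₂
end
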